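/- For all κ ≥ 0, the function d(κ) = sqrt(κ I₁(κ)/I₀(κ) − log I₀(κ)) is well-defined, i.e., κ I₁(κ)/I₀(κ) − log I₀(κ) ≥ 0, with equality iff κ = 0. -/

import Mathlib

open Real MeasureTheory

noncomputable def besselI0 (κ : ℝ) : ℝ :=
  (1 / (2 * Real.pi)) * ∫ t in (0:ℝ)..(2 * Real.pi), Real.exp (κ * Real.cos t)

noncomputable def besselI1 (κ : ℝ) : ℝ :=
  (1 / (2 * Real.pi)) * ∫ t in (0:ℝ)..(2 * Real.pi), Real.cos t * Real.exp (κ * Real.cos t)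

/-!
With `f t = exp (κ cos t)` and `c = I₀(κ)`, the von Mises density relative to the uniform law
is `f / c`, and `κ I₁/I₀ - log I₀ = (1/2π) ∫ klFun (f / c)` where `klFun x = x log x + 1 - x ≥ 0`
vanishes only at `x = 1`. For `κ ≠ 0` the values `f 0 = exp κ` and `f π = exp (-κ)` differ,
so the continuous integrand is positive somewhere and the integral is positive.
-/

open InformationTheory

noncomputable def vonMisesKL (κ : ℝ) : ℝ :=
  κ * besselI1 κ / besselI0 κ - Real.log (besselI0 κ)

lemma integral_exp_mul_cos (κ : ℝ) :
    ∫ t in (0:ℝ)..(2 * π), exp (κ * cos t) = 2 * π * besselI0 κ := by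
  rw [besselI0, ← mul_assoc, mul_one_div_cancel (by positivity), one_mul]

lemma integral_cos_mul_exp_mul_cos (κ : ℝ) :
    ∫ t in (0:ℝ)..(2 * π), cos t * exp (κ * cos t) = 2 * π * besselI1 κ := by
  rw [besselI1, ← mul_assoc, mul_one_div_cancel (by positivity), one_mul]

lemma besselI0_pos (κ : ℝ) : 0 < besselI0 κ := by
  have hπ : (0:ℝ) < 2 * π := by positivity
  have hf : Continuous fun t => exp (κ * cos t) := by fun_prop
  have hint : 0 < ∫ t in (0:ℝ)..(2 * π), exp (κ * cos t) :=
    intervalIntegral.intervalIntegral_pos_of_pos_on (hf.intervalIntegrable _ _)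
      (fun t _ => exp_pos _) hπ
  rw [integral_exp_mul_cos] at hint
  exact pos_of_mul_pos_right hint hπ.le

lemma besselI0_zero : besselI0 0 = 1 := by
  simp [besselI0, field]

lemma integral_klFun_vonMises (κ : ℝ) :
    ∫ t in (0:ℝ)..(2 * π), klFun (exp (κ * cos t) / besselI0 κ) = 2 * π * vonMisesKL κ := by
  have hc : besselI0 κ ≠ 0 := (besselI0_pos κ).ne'
  have hpointwise : (fun t => klFun (exp (κ * cos t) / besselI0 κ)) = fun t =>
      (κ / besselI0 κ) * (cos t * exp (κ * cos t))
        - ((log (besselI0 κ) + 1) / besselI0 κ) * exp (κ * cos t) + 1 := by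
    ext t
    rw [klFun_apply, log_div (exp_pos _).ne' hc, log_exp]
    field_simp
    ring
  have hf : Continuous fun t => exp (κ * cos t) := by fun_prop
  have hg : Continuous fun t => cos t * exp (κ * cos t) := by fun_prop
  rw [hpointwise, intervalIntegral.integral_add, intervalIntegral.integral_sub,
    intervalIntegral.integral_const_mul, intervalIntegral.integral_const_mul,
    integral_exp_mul_cos, integral_cos_mul_exp_mul_cos, intervalIntegral.integral_const,
    vonMisesKL]
  · field_simp
    ring
  · exact (hg.const_mul _).intervalIntegrable _ _
  · exact (hf.const_mul _).intervalIntegrable _ _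
  · exact ((hg.const_mul _).sub (hf.const_mul _)).intervalIntegrable _ _
  · exact intervalIntegrable_const

lemma vonMisesKL_nonneg (κ : ℝ) : 0 ≤ vonMisesKL κ := by
  have hint : 0 ≤ ∫ t in (0:ℝ)..(2 * π), klFun (exp (κ * cos t) / besselI0 κ) :=
    intervalIntegral.integral_nonneg (by positivity)
      fun t _ => klFun_nonneg (div_pos (exp_pos _) (besselI0_pos κ)).le
  rw [integral_klFun_vonMises] at hint
  exact nonneg_of_mul_nonneg_right hint (by positivity)

lemma vonMisesKL_pos {κ : ℝ} (hκ : κ ≠ 0) : 0 < vonMisesKL κ := by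
  have hc := besselI0_pos κ
  have hdensity_nonneg (t : ℝ) : 0 ≤ exp (κ * cos t) / besselI0 κ := by positivity
  have hwitness : ∃ t ∈ Set.Icc 0 (2 * π), 0 < klFun (exp (κ * cos t) / besselI0 κ) := by
    by_contra! hle
    have hflat (t : ℝ) (ht : t ∈ Set.Icc 0 (2 * π)) : exp (κ * cos t) = besselI0 κ := by
      have hzero := le_antisymm (hle t ht) (klFun_nonneg (hdensity_nonneg t))
      rwa [klFun_eq_zero_iff (hdensity_nonneg t), div_eq_one_iff_eq hc.ne'] at hzero
    have h0 := hflat 0 ⟨le_rfl, by positivity⟩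
    have hπ := hflat π ⟨pi_pos.le, by linarith [pi_pos]⟩
    rw [cos_zero, mul_one] at h0
    rw [cos_pi, mul_neg_one] at hπ
    have : κ = -κ := exp_injective (h0.trans hπ.symm)
    exact hκ (by linarith)
  have hint : 0 < ∫ t in (0:ℝ)..(2 * π), klFun (exp (κ * cos t) / besselI0 κ) :=
    intervalIntegral.integral_pos (by positivity) (by fun_prop)
      (fun t _ => klFun_nonneg (hdensity_nonneg t)) hwitness
  rw [integral_klFun_vonMises] at hint
  exact pos_of_mul_pos_right hint (by positivity)

lemma vonMisesKL_zero : vonMisesKL 0 = 0 := by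
  simp [vonMisesKL, besselI0_zero]

lemma vonMisesKL_eq_zero_iff (κ : ℝ) : vonMisesKL κ = 0 ↔ κ = 0 :=
  ⟨fun h => by_contra fun hκ => (vonMisesKL_pos hκ).ne' h, fun h => h ▸ vonMisesKL_zero⟩

theorem vonMises_distance_wellDefined_general (κ : ℝ) :
    0 ≤ κ * besselI1 κ / besselI0 κ - Real.log (besselI0 κ) ∧
      (κ * besselI1 κ / besselI0 κ - Real.log (besselI0 κ) = 0 ↔ κ = 0) :=
  ⟨vonMisesKL_nonneg κ, vonMisesKL_eq_zero_iff κ⟩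

theorem vonMises_distance_wellDefined (κ : ℝ) (hκ : 0 ≤ κ) :
    0 ≤ κ * besselI1 κ / besselI0 κ - Real.log (besselI0 κ) ∧
      (κ * besselI1 κ / besselI0 κ - Real.log (besselI0 κ) = 0 ↔ κ = 0) :=
  vonMises_distance_wellDefined_general κ
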